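/- Assume n ≥ 2, M_{{1}} ≤ M_{{2}}, min_{x∈Δ_m} u^L(x,2) < M_{{1}}, that for j ∈ {1,2} there are a_j ∈ ℝ^m, γ_j > 0, β_j ∈ ℝ with u^L(x,j) = γ_j·(a_j·x) + β_j for all x ∈ Δ_m, that a_1 is not constant (a_{1,i} ≠ a_{1,k} for some i,k ∈ [m]), and that there exists i ∈ argmax_{i'∈[m]} u^L(i',2) with u^L(i,2) > u^L(i,1). Set d_j* = (M_{{1,2}} − β_j)/γ_j, P₁(d₁,d₂) = {x ∈ Δ_m : a_2·x ≥ d₂ and a_1·x ≤ d₁}, P₂(d₁,d₂) = {x ∈ Δ_m : a_2·x ≤ d₂}. Then there exists ε > 0 such that P₁(d₁*−ε, d₂*) ≠ ∅ and P₂(d₁*, d₂*−ε) ≠ ∅; consequently P₁(d₁,d₂) ≠ ∅ and P₂(d₁,d₂) ≠ ∅ for all d₁ ∈ [d₁*−ε, d₁*] and d₂ ∈ [d₂*−ε, d₂*]. -/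

import Mathlib

open scoped Classical
open Finset

noncomputable section

/-- The leader's mixed-strategy simplex Δ_m. -/
def simplex (m : ℕ) : Set (Fin m → ℝ) := stdSimplex ℝ (Fin m)

/-- Linear extension of a payoff matrix to mixed strategies: u(x,j) = ∑ i, x i * u i j. -/
def pay {m n : ℕ} (u : Fin m → Fin n → ℝ) (x : Fin m → ℝ) (j : Fin n) : ℝ :=
  ∑ i, x i * u i j

/-- Inner product on ℝ^m. -/
def dot {m : ℕ} (a x : Fin m → ℝ) : ℝ := ∑ i, a i * x i

/-- min_{j ∈ S} u(x, j). -/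
def minOnS {m n : ℕ} (u : Fin m → Fin n → ℝ) (S : Set (Fin n)) (x : Fin m → ℝ) : ℝ :=
  sInf ((fun j => pay u x j) '' S)

/-- The leader's maximin value M_S = max_{x∈Δ_m} min_{j∈S} u(x,j). -/
def Mval {m n : ℕ} (u : Fin m → Fin n → ℝ) (S : Set (Fin n)) : ℝ :=
  sSup (minOnS u S '' simplex m)

/-- The set 𝓜_S of maximin strategies. -/
def argMM {m n : ℕ} (u : Fin m → Fin n → ℝ) (S : Set (Fin n)) : Set (Fin m → ℝ) :=
  {x ∈ simplex m | minOnS u S x = Mval u S}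

/-- The follower's best-response set BR(x) = argmax_j uF(x,j). -/
def BR {m n : ℕ} (uF : Fin m → Fin n → ℝ) (x : Fin m → ℝ) : Set (Fin n) :=
  {j | ∀ j', pay uF x j' ≤ pay uF x j}

/-- Strong Stackelberg equilibrium of the game (uL, uF). -/
def SSE {m n : ℕ} (uL uF : Fin m → Fin n → ℝ) (x : Fin m → ℝ) (j : Fin n) : Prop :=
  x ∈ simplex m ∧ j ∈ BR uF x ∧
    ∀ x' ∈ simplex m, ∀ j' ∈ BR uF x', pay uL x' j' ≤ pay uL x j

/-- (x, j) is inducible with respect to the leader payoff uL. -/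
def Inducible {m n : ℕ} (uL : Fin m → Fin n → ℝ) (x : Fin m → ℝ) (j : Fin n) : Prop :=
  ∃ uF : Fin m → Fin n → ℝ, SSE uL uF x j

/-- μ is a (maximin-)cover of S w.r.t. uL: max_{x∈𝓜_S} max_{j∈BR(x)} uL(x,j) < M_S. -/
def IsCover {m n : ℕ} (uL μ : Fin m → Fin n → ℝ) (S : Set (Fin n)) : Prop :=
  ∀ x ∈ argMM uL S, ∀ j ∈ BR μ x, pay uL x j < Mval uL S

/-- μ is a proper cover of S w.r.t. uL. -/
def IsProperCover {m n : ℕ} (uL μ : Fin m → Fin n → ℝ) (S : Set (Fin n)) : Prop :=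
  IsCover uL μ S ∧ ∀ x ∈ simplex m, ∀ j ∈ S, j ∉ BR μ x

/-- P₁(d₁,d₂) = {x ∈ Δ_m : a₂·x ≥ d₂ and a₁·x ≤ d₁}. -/
def P1 {m : ℕ} (a1 a2 : Fin m → ℝ) (d1 d2 : ℝ) : Set (Fin m → ℝ) :=
  {x ∈ simplex m | d2 ≤ dot a2 x ∧ dot a1 x ≤ d1}

/-- P₂(d₁,d₂) = {x ∈ Δ_m : a₂·x ≤ d₂}. -/
def P2 {m : ℕ} (a2 : Fin m → ℝ) (d2 : ℝ) : Set (Fin m → ℝ) :=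
  {x ∈ simplex m | dot a2 x ≤ d2}

/-!
Write `M` for `M_{1,2}`. By the definition of `M` as a maximin value, no strategy makes both
`u(·,1)` and `u(·,2)` exceed `M`. The two strips are nonempty once there are strategies `x` with
`u(x,1) < M ≤ u(x,2)` and `y` with `u(y,2) < M`; `ε` is then the smaller of the two slacks, read
through the affine representations. Each strategy is found by contradiction: without it one finds
a point where one payoff exceeds `M` strictly and the other weakly, and a point where the other
exceeds `M` strictly; a short step along the segment between them makes both exceed `M`.
-/

open Filter Topology

lemma exists_pos_lt_convexCombination {a b c : ℝ} (h : c < a) :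
    ∃ t ∈ Set.Ioc (0 : ℝ) 1, c < (1 - t) * a + t * b := by
  have hlim : Tendsto (fun t : ℝ => (1 - t) * a + t * b) (𝓝[>] 0) (𝓝 a) := by
    have hcont : Continuous (fun t : ℝ => (1 - t) * a + t * b) := by fun_prop
    simpa using (hcont.tendsto 0).mono_left nhdsWithin_le_nhds
  exact ((eventually_mem_set.2 (Ioc_mem_nhdsGT one_pos)).and
    (hlim.eventually (lt_mem_nhds h))).exists

section Payoffs

variable {m n : ℕ} (u : Fin m → Fin n → ℝ)

lemma single_mem_simplex (i : Fin m) : (Pi.single i 1 : Fin m → ℝ) ∈ simplex m :=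
  single_mem_stdSimplex ℝ i

lemma combination_mem_simplex {x y : Fin m → ℝ} (hx : x ∈ simplex m) (hy : y ∈ simplex m)
    {t : ℝ} (ht : t ∈ Set.Ioc (0 : ℝ) 1) : (1 - t) • x + t • y ∈ simplex m :=
  convex_stdSimplex ℝ (Fin m) hx hy (by linarith [ht.2]) ht.1.le (by ring)

lemma pay_single (i : Fin m) (j : Fin n) : pay u (Pi.single i 1) j = u i j := by
  simp [pay, Pi.single_apply]

lemma dot_single (a : Fin m → ℝ) (i : Fin m) : dot a (Pi.single i 1) = a i := by
  simp [dot, Pi.single_apply]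

lemma pay_combination (x y : Fin m → ℝ) (t : ℝ) (j : Fin n) :
    pay u ((1 - t) • x + t • y) j = (1 - t) * pay u x j + t * pay u y j := by
  simp only [pay, Pi.add_apply, Pi.smul_apply, smul_eq_mul, add_mul, sum_add_distrib,
    mul_sum, mul_assoc]

lemma continuous_pay (j : Fin n) : Continuous (fun x => pay u x j) := by
  unfold pay; fun_prop

lemma pay_le_of_forall_le {x : Fin m → ℝ} (hx : x ∈ simplex m) {j : Fin n} {c : ℝ}
    (hc : ∀ i, u i j ≤ c) : pay u x j ≤ c :=
  calc pay u x j ≤ ∑ i, x i * c :=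
        sum_le_sum fun i _ => mul_le_mul_of_nonneg_left (hc i) (hx.1 i)
    _ = c := by rw [← sum_mul, hx.2, one_mul]

lemma minOnS_singleton (j : Fin n) : minOnS u {j} = fun x => pay u x j := by
  ext x; rw [minOnS, Set.image_singleton, csInf_singleton]

lemma minOnS_pair (j k : Fin n) : minOnS u {j, k} = fun x => min (pay u x j) (pay u x k) := by
  ext x; rw [minOnS, Set.image_pair, csInf_pair]

lemma min_pay_le_Mval_pair {x : Fin m → ℝ} (hx : x ∈ simplex m) (j k : Fin n) :
    min (pay u x j) (pay u x k) ≤ Mval u {j, k} := by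
  have hbdd : BddAbove (minOnS u {j, k} '' simplex m) := by
    rw [minOnS_pair]
    exact (isCompact_stdSimplex ℝ (Fin m)).bddAbove_image
      ((continuous_pay u j).min (continuous_pay u k)).continuousOn
  calc min (pay u x j) (pay u x k) = minOnS u {j, k} x := by rw [minOnS_pair]
    _ ≤ Mval u {j, k} := le_csSup hbdd (Set.mem_image_of_mem _ hx)

lemma simplex_nonempty [Nonempty (Fin m)] : (simplex m).Nonempty :=
  ⟨_, single_mem_simplex (Classical.arbitrary _)⟩

lemma exists_lt_pay_of_lt_Mval_singleton [Nonempty (Fin m)] {j : Fin n} {c : ℝ}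
    (hc : c < Mval u {j}) : ∃ x ∈ simplex m, c < pay u x j := by
  rw [Mval, minOnS_singleton] at hc
  obtain ⟨_, ⟨x, hx, rfl⟩, hlt⟩ :=
    exists_lt_of_lt_csSup (simplex_nonempty.image _) hc
  exact ⟨x, hx, hlt⟩

theorem exists_pay_lt_Mval_pair_le_pay {j k : Fin n} (i : Fin m) (hi : ∀ i', u i' k ≤ u i k)
    (hlt : u i j < u i k) (hcol : ∃ i₁ i₂, u i₁ j ≠ u i₂ j) :
    ∃ x ∈ simplex m, pay u x j < Mval u {j, k} ∧ Mval u {j, k} ≤ pay u x k := by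
  set M := Mval u {j, k}
  have hMk : M ≤ u i k := csSup_le (Set.Nonempty.image _ ⟨_, single_mem_simplex i⟩) <| by
    rintro _ ⟨z, hz, rfl⟩
    simpa [minOnS_pair] using Or.inr (pay_le_of_forall_le u hz hi)
  by_contra hcon
  have H : ∀ z ∈ simplex m, M ≤ pay u z k → M ≤ pay u z j :=
    fun z hz hk => not_lt.1 fun hj => hcon ⟨z, hz, hj, hk⟩
  -- Were `j` never below `M` where `k` reaches `M`, `e_i` would sit on the level `u i j = M`,
  -- and a short step from `e_i` towards a vertex `e_l` with `u l j ≠ M` keeps `k` above `M`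
  -- while moving `j` off that level: downwards contradicts `H`, upwards beats the maximin value.
  have hij : u i j = M := by
    have hle := min_pay_le_Mval_pair u (single_mem_simplex i) j k
    rw [pay_single, pay_single, min_eq_left hlt.le] at hle
    have hge := H _ (single_mem_simplex i)
    rw [pay_single, pay_single] at hge
    exact le_antisymm hle (hge hMk)
  obtain ⟨l, hl⟩ : ∃ l, u l j ≠ u i j := by
    by_contra! hall
    obtain ⟨i₁, i₂, hne⟩ := hcol
    exact hne ((hall i₁).trans (hall i₂).symm)
  obtain ⟨t, ht, hzk⟩ := exists_pos_lt_convexCombination (b := u l k) (hij ▸ hlt)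
  set z := (1 - t) • Pi.single i 1 + t • Pi.single l 1
  have hz : z ∈ simplex m :=
    combination_mem_simplex (single_mem_simplex i) (single_mem_simplex l) ht
  have hpay : ∀ j', pay u z j' = (1 - t) * u i j' + t * u l j' := fun j' => by
    rw [pay_combination, pay_single, pay_single]
  have hzj : M ≤ pay u z j := H z hz (by rw [hpay]; exact hzk.le)
  have hlj : M < u l j := by
    rw [hpay, hij] at hzj
    exact lt_of_le_of_ne (by nlinarith [ht.1]) (hij ▸ hl.symm)
  have hzj' : M < pay u z j := by rw [hpay, hij]; nlinarith [ht.1]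
  exact (min_pay_le_Mval_pair u hz j k).not_gt (lt_min hzj' (by rwa [hpay]))

theorem exists_pay_lt_Mval_pair [Nonempty (Fin m)] {j k : Fin n}
    (hM : Mval u {j} ≤ Mval u {k})
    (hmin : sInf ((fun x => pay u x k) '' simplex m) < Mval u {j}) :
    ∃ y ∈ simplex m, pay u y k < Mval u {j, k} := by
  set M := Mval u {j, k}
  by_contra! H
  have hMj : M < Mval u {j} := by
    obtain ⟨_, ⟨y, hy, rfl⟩, hlt⟩ :=
      exists_lt_of_csInf_lt (simplex_nonempty.image _) hmin
    exact (H y hy).trans_lt hlt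
  obtain ⟨p, hp, hpj⟩ := exists_lt_pay_of_lt_Mval_singleton u hMj
  obtain ⟨q, hq, hqk⟩ := exists_lt_pay_of_lt_Mval_singleton u (hMj.trans_le hM)
  obtain ⟨t, ht, hzj⟩ := exists_pos_lt_convexCombination (b := pay u q j) hpj
  have hz := combination_mem_simplex hp hq ht
  have hzk : M < pay u ((1 - t) • p + t • q) k := by
    rw [pay_combination]; nlinarith [H p hp, ht.1, ht.2]
  exact (min_pay_le_Mval_pair u hz j k).not_gt (lt_min (by rwa [pay_combination]) hzk)

end Payoffs

lemma P1_mono {m : ℕ} {a1 a2 : Fin m → ℝ} {d1 d1' d2 d2' : ℝ} (h1 : d1 ≤ d1') (h2 : d2' ≤ d2) :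
    P1 a1 a2 d1 d2 ⊆ P1 a1 a2 d1' d2' :=
  fun _ ⟨hx, hx2, hx1⟩ => ⟨hx, h2.trans hx2, hx1.trans h1⟩

lemma P2_mono {m : ℕ} {a2 : Fin m → ℝ} {d2 d2' : ℝ} (h : d2 ≤ d2') : P2 a2 d2 ⊆ P2 a2 d2' :=
  fun _ ⟨hx, hx2⟩ => ⟨hx, hx2.trans h⟩

theorem Pj_nonempty_strip_general {m n : ℕ}
    (uL : Fin m → Fin n → ℝ) (j1 j2 : Fin n)
    (hM : Mval uL {j1} ≤ Mval uL {j2})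
    (hmin : sInf ((fun x => pay uL x j2) '' simplex m) < Mval uL {j1})
    (a1 a2 : Fin m → ℝ) (γ1 γ2 : ℝ) (hγ1 : 0 < γ1) (hγ2 : 0 < γ2) (β1 β2 : ℝ)
    (h1 : ∀ x ∈ simplex m, pay uL x j1 = γ1 * dot a1 x + β1)
    (h2 : ∀ x ∈ simplex m, pay uL x j2 = γ2 * dot a2 x + β2)
    (ha1 : ∃ i k : Fin m, a1 i ≠ a1 k)
    (hdom : ∃ i : Fin m, (∀ i' : Fin m, uL i' j2 ≤ uL i j2) ∧ uL i j1 < uL i j2) :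
    ∃ ε : ℝ, 0 < ε ∧
      (P1 a1 a2 ((Mval uL {j1, j2} - β1) / γ1 - ε) ((Mval uL {j1, j2} - β2) / γ2)).Nonempty ∧
      (P2 a2 ((Mval uL {j1, j2} - β2) / γ2 - ε)).Nonempty ∧
      ∀ d1 : ℝ, (Mval uL {j1, j2} - β1) / γ1 - ε ≤ d1 → d1 ≤ (Mval uL {j1, j2} - β1) / γ1 →
        ∀ d2 : ℝ, (Mval uL {j1, j2} - β2) / γ2 - ε ≤ d2 → d2 ≤ (Mval uL {j1, j2} - β2) / γ2 →
          (P1 a1 a2 d1 d2).Nonempty ∧ (P2 a2 d2).Nonempty := by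
  obtain ⟨i, hi, hlt⟩ := hdom
  have : Nonempty (Fin m) := ⟨i⟩
  have hcol : ∃ i₁ i₂, uL i₁ j1 ≠ uL i₂ j1 := by
    obtain ⟨i₁, i₂, hne⟩ := ha1
    refine ⟨i₁, i₂, fun heq => hne ?_⟩
    simp only [← pay_single uL, h1 _ (single_mem_simplex _), dot_single] at heq
    exact mul_left_cancel₀ hγ1.ne' (add_right_cancel heq)
  obtain ⟨x, hx, hx1, hx2⟩ := exists_pay_lt_Mval_pair_le_pay uL i hi hlt hcol
  obtain ⟨y, hy, hy2⟩ := exists_pay_lt_Mval_pair uL hM hmin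
  set M := Mval uL {j1, j2}
  have hdx1 : dot a1 x < (M - β1) / γ1 := by rw [lt_div_iff₀ hγ1]; linarith [h1 x hx]
  have hdx2 : (M - β2) / γ2 ≤ dot a2 x := by rw [div_le_iff₀ hγ2]; linarith [h2 x hx]
  have hdy2 : dot a2 y < (M - β2) / γ2 := by rw [lt_div_iff₀ hγ2]; linarith [h2 y hy]
  set ε := min ((M - β1) / γ1 - dot a1 x) ((M - β2) / γ2 - dot a2 y)
  have hε : 0 < ε := lt_min (by linarith) (by linarith)
  have hεx : ε ≤ (M - β1) / γ1 - dot a1 x := min_le_left _ _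
  have hεy : ε ≤ (M - β2) / γ2 - dot a2 y := min_le_right _ _
  have hxP1 : x ∈ P1 a1 a2 ((M - β1) / γ1 - ε) ((M - β2) / γ2) := ⟨hx, hdx2, by linarith⟩
  have hyP2 : y ∈ P2 a2 ((M - β2) / γ2 - ε) := ⟨hy, by linarith⟩
  refine ⟨ε, hε, ⟨x, hxP1⟩, ⟨y, hyP2⟩, fun d1 hd1 _ d2 hd2 hd2' => ?_⟩
  exact ⟨⟨x, P1_mono hd1 hd2' hxP1⟩, ⟨y, P2_mono hd2 hyP2⟩⟩

/-- there exists ε > 0 with P₁(d₁*−ε, d₂*) ≠ ∅ and P₂(d₁*, d₂*−ε) ≠ ∅;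
consequently P₁(d₁,d₂) ≠ ∅ and P₂(d₁,d₂) ≠ ∅ for all d₁ ∈ [d₁*−ε, d₁*] and
d₂ ∈ [d₂*−ε, d₂*]. (Actions 1, 2 are j1, j2.) -/
theorem Pj_nonempty_strip {m n : ℕ} (hm : 0 < m)
    (uL : Fin m → Fin n → ℝ) (j1 j2 : Fin n) (hj : j1 ≠ j2)
    (hM : Mval uL {j1} ≤ Mval uL {j2})
    (hmin : sInf ((fun x => pay uL x j2) '' simplex m) < Mval uL {j1})
    (a1 a2 : Fin m → ℝ) (γ1 γ2 : ℝ) (hγ1 : 0 < γ1) (hγ2 : 0 < γ2) (β1 β2 : ℝ)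
    (h1 : ∀ x ∈ simplex m, pay uL x j1 = γ1 * dot a1 x + β1)
    (h2 : ∀ x ∈ simplex m, pay uL x j2 = γ2 * dot a2 x + β2)
    (ha1 : ∃ i k : Fin m, a1 i ≠ a1 k)
    (hdom : ∃ i : Fin m, (∀ i' : Fin m, uL i' j2 ≤ uL i j2) ∧ uL i j1 < uL i j2) :
    ∃ ε : ℝ, 0 < ε ∧
      (P1 a1 a2 ((Mval uL {j1, j2} - β1) / γ1 - ε) ((Mval uL {j1, j2} - β2) / γ2)).Nonempty ∧
      (P2 a2 ((Mval uL {j1, j2} - β2) / γ2 - ε)).Nonempty ∧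
      ∀ d1 : ℝ, (Mval uL {j1, j2} - β1) / γ1 - ε ≤ d1 → d1 ≤ (Mval uL {j1, j2} - β1) / γ1 →
        ∀ d2 : ℝ, (Mval uL {j1, j2} - β2) / γ2 - ε ≤ d2 → d2 ≤ (Mval uL {j1, j2} - β2) / γ2 →
          (P1 a1 a2 d1 d2).Nonempty ∧ (P2 a2 d2).Nonempty :=
  Pj_nonempty_strip_general uL j1 j2 hM hmin a1 a2 γ1 γ2 hγ1 hγ2 β1 β2 h1 h2 ha1 hdom
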